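/- Let X₁, X₂ be independent standard normal random variables, α ∈ (0,1/2), and c = Φ⁻¹(1-α). Then as μ₂ → ∞, the probability P((0+X₁)·(μ₂+X₂) < 0 and |X₁| > c and |μ₂+X₂| > c) converges to α. Hence the supremum over the null hypothesis {μ₁μ₂ ≥ 0} of the rejection probability equals α. -/

import Mathlib

open MeasureTheory ProbabilityTheory

/-- The standard normal distribution on ℝ. -/
noncomputable def stdGauss : Measure ℝ := gaussianReal 0 1

/-- Φ, the standard normal CDF. -/
noncomputable def Φ : ℝ → ℝ := fun x => cdf stdGauss x

/-- The joint law of two independent standard normals. -/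
noncomputable def P2 : Measure (ℝ × ℝ) := stdGauss.prod stdGauss

/-!
The rejection region is the union of the two rectangles `{X₁ + μ₁ < -c, X₂ + μ₂ > c}` and
`{X₁ + μ₁ > c, X₂ + μ₂ < -c}`, so its probability is
`R(μ₁, μ₂) = Φ(-c-μ₁)(1 - Φ(c-μ₂)) + (1 - Φ(c-μ₁))Φ(-c-μ₂)`.
Along `μ₁ = 0, μ₂ → ∞` this tends to `Φ(-c) = α`.

For the bound `R ≤ α` on the null, the symmetry `R(-μ₁, -μ₂) = R(μ₁, μ₂)` reduces to
`μ₁, μ₂ ≥ 0`. The Gaussian location family has monotone likelihood ratio, hence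
`x ↦ Φ(x - d) / Φ(x)` is nondecreasing for `d ≥ 0`; with `d = 2c` this gives
`pᵢ (1 - α) ≤ α (1 - qᵢ)` for `pᵢ = Φ(-c-μᵢ)`, `qᵢ = 1 - Φ(c-μᵢ) ∈ [α, 1]`. Then
`R (1 - α) ≤ α ((1 - q₁) q₂ + q₁ (1 - q₂)) ≤ α (1 - α)`, the last step because the bilinear
middle term is maximal at a vertex of `[α, 1]²` and `α ≤ 1/2`.
-/

open Set Filter Topology NNReal

section LikelihoodRatio

variable {μ : Measure ℝ} {f g : ℝ → ℝ}

lemma integral_Iic_mul_integral_Iic_le (hf : Integrable f μ) (hg : Integrable g μ)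
    (hfg : ∀ s t, s ≤ t → g s * f t ≤ f s * g t) {x y : ℝ} (hxy : x ≤ y) :
    (∫ t in Iic x, g t ∂μ) * ∫ t in Iic y, f t ∂μ ≤
      (∫ t in Iic y, g t ∂μ) * ∫ t in Iic x, f t ∂μ := by
  have split : ∀ h : ℝ → ℝ, Integrable h μ →
      ∫ t in Iic y, h t ∂μ = (∫ t in Iic x, h t ∂μ) + ∫ t in Ioc x y, h t ∂μ := fun h hh => by
    rw [← setIntegral_union (Iic_disjoint_Ioc le_rfl) measurableSet_Ioc hh.restrict hh.restrict,
      Iic_union_Ioc_eq_Iic hxy]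
  have cross : (∫ s in Iic x, g s ∂μ) * ∫ t in Ioc x y, f t ∂μ ≤
      (∫ s in Iic x, f s ∂μ) * ∫ t in Ioc x y, g t ∂μ := by
    rw [← integral_mul_const, ← integral_mul_const]
    refine setIntegral_mono_on (hg.restrict.mul_const _) (hf.restrict.mul_const _)
      measurableSet_Iic fun s hs => ?_
    rw [← integral_const_mul, ← integral_const_mul]
    exact setIntegral_mono_on (hf.restrict.const_mul _) (hg.restrict.const_mul _)
      measurableSet_Ioc fun t ht => hfg s t (le_trans hs ht.1.le)
  rw [split f hf, split g hg]
  linear_combination cross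

end LikelihoodRatio

lemma gaussianPDFReal_mul_le {m m' : ℝ} (v : ℝ≥0) (hm : m ≤ m') {s t : ℝ} (hst : s ≤ t) :
    gaussianPDFReal m' v s * gaussianPDFReal m v t ≤
      gaussianPDFReal m v s * gaussianPDFReal m' v t := by
  simp only [gaussianPDFReal]
  rw [mul_mul_mul_comm, mul_mul_mul_comm _ (Real.exp _), ← Real.exp_add, ← Real.exp_add,
    ← add_div, ← add_div]
  have key : -(s - m') ^ 2 + -(t - m) ^ 2 ≤ -(s - m) ^ 2 + -(t - m') ^ 2 := by
    nlinarith [mul_nonneg (sub_nonneg.2 hm) (sub_nonneg.2 hst)]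
  gcongr

lemma cdf_gaussianReal_mul_le {m m' : ℝ} {v : ℝ≥0} (hv : v ≠ 0) (hm : m ≤ m') {x y : ℝ}
    (hxy : x ≤ y) :
    cdf (gaussianReal m' v) x * cdf (gaussianReal m v) y ≤
      cdf (gaussianReal m' v) y * cdf (gaussianReal m v) x := by
  have hcdf : ∀ m z, cdf (gaussianReal m v) z = ∫ t in Iic z, gaussianPDFReal m v t := fun m z => by
    rw [cdf_eq_real, measureReal_def, gaussianReal_apply_eq_integral _ hv,
      ENNReal.toReal_ofReal (setIntegral_nonneg measurableSet_Iic fun t _ =>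
        gaussianPDFReal_nonneg _ _ _)]
  simp only [hcdf]
  exact integral_Iic_mul_integral_Iic_le (integrable_gaussianPDFReal m v)
    (integrable_gaussianPDFReal m' v) (fun s t hst => gaussianPDFReal_mul_le v hm hst) hxy

instance : IsProbabilityMeasure stdGauss := by unfold stdGauss; infer_instance

instance : NullSingletonClass stdGauss := nullSingletonClass_gaussianReal one_ne_zero

lemma Φ_eq_real (x : ℝ) : Φ x = stdGauss.real (Iic x) := cdf_eq_real _ x

lemma stdGauss_real_Iio (x : ℝ) : stdGauss.real (Iio x) = Φ x := by
  rw [Φ_eq_real, measureReal_congr Iio_ae_eq_Iic]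

lemma stdGauss_real_Ioi (x : ℝ) : stdGauss.real (Ioi x) = 1 - Φ x := by
  rw [← compl_Iic, probReal_compl_eq_one_sub measurableSet_Iic, Φ_eq_real]

lemma Φ_neg (x : ℝ) : Φ (-x) = 1 - Φ x := by
  have hsymm : stdGauss.map (fun t => -t) = stdGauss := by
    rw [stdGauss, gaussianReal_map_neg, neg_zero]
  have hpre : (fun t : ℝ => -t) ⁻¹' Iic (-x) = Ici x := by ext; simp
  rw [Φ_eq_real, ← hsymm, map_measureReal_apply measurable_neg measurableSet_Iic, hpre,
    ← compl_Iio, probReal_compl_eq_one_sub measurableSet_Iio, stdGauss_real_Iio]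

lemma Φ_sub_eq_cdf (d x : ℝ) : Φ (x - d) = cdf (gaussianReal d 1) x := by
  have hshift : stdGauss.map (· + d) = gaussianReal d 1 := by
    rw [stdGauss, gaussianReal_map_add_const, zero_add]
  rw [Φ_eq_real, cdf_eq_real, ← hshift,
    map_measureReal_apply (measurable_add_const d) measurableSet_Iic, preimage_add_const_Iic]

lemma Φ_sub_mul_le {d x y : ℝ} (hd : 0 ≤ d) (hxy : x ≤ y) :
    Φ (x - d) * Φ y ≤ Φ (y - d) * Φ x := by
  simpa only [← Φ_sub_eq_cdf, sub_zero] using cdf_gaussianReal_mul_le one_ne_zero hd hxy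

lemma Φ_neg_sub_mul_le {c μ : ℝ} (hc : 0 ≤ c) (hμ : 0 ≤ μ) :
    Φ (-c - μ) * Φ c ≤ Φ (-c) * Φ (c - μ) := by
  have h := Φ_sub_mul_le (d := 2 * c) (x := c - μ) (y := c) (by linarith) (by linarith)
  rwa [show c - μ - 2 * c = -c - μ by ring, show c - 2 * c = -c by ring] at h

lemma Φ_mono : Monotone Φ := monotone_cdf stdGauss

lemma Φ_nonneg (x : ℝ) : 0 ≤ Φ x := cdf_nonneg stdGauss x

lemma Φ_le_one (x : ℝ) : Φ x ≤ 1 := cdf_le_one stdGauss x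

lemma Φ_zero : Φ 0 = 1 / 2 := by
  have h := Φ_neg 0
  rw [neg_zero] at h
  linarith

lemma pos_of_Φ_eq_one_sub {α c : ℝ} (hα : α < 1 / 2) (hc : Φ c = 1 - α) : 0 < c := by
  by_contra! h
  linarith [Φ_mono h, Φ_zero]

lemma mul_add_mul_le_of_mul_le {α p₁ p₂ q₁ q₂ : ℝ} (hα : α ∈ Icc 0 (1 / 2))
    (hq₁ : q₁ ∈ Icc α 1) (hq₂ : q₂ ∈ Icc α 1)
    (h₁ : p₁ * (1 - α) ≤ α * (1 - q₁)) (h₂ : p₂ * (1 - α) ≤ α * (1 - q₂)) :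
    p₁ * q₂ + q₁ * p₂ ≤ α := by
  obtain ⟨hα0, hα⟩ := hα
  obtain ⟨hαq₁, hq₁1⟩ := hq₁
  obtain ⟨hαq₂, hq₂1⟩ := hq₂
  have bilinear_le : (1 - q₁) * q₂ + q₁ * (1 - q₂) ≤ 1 - α := by
    rcases le_total q₁ (1 / 2) with h | h
    · nlinarith [mul_nonneg (by linarith : (0:ℝ) ≤ 1 - 2 * q₁) (by linarith : (0:ℝ) ≤ 1 - q₂)]
    · nlinarith [mul_nonneg (by linarith : (0:ℝ) ≤ 2 * q₁ - 1) (by linarith : (0:ℝ) ≤ q₂ - α)]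
  have scaled : (p₁ * q₂ + q₁ * p₂) * (1 - α) ≤ α * (1 - α) := by
    nlinarith [mul_le_mul_of_nonneg_right h₁ (hα0.trans hαq₂),
      mul_le_mul_of_nonneg_right h₂ (hα0.trans hαq₁)]
  exact le_of_mul_le_mul_right scaled (by linarith)

noncomputable def rejectionProb (c μ₁ μ₂ : ℝ) : ℝ :=
  Φ (-c - μ₁) * (1 - Φ (c - μ₂)) + (1 - Φ (c - μ₁)) * Φ (-c - μ₂)

lemma rejectionProb_neg (c μ₁ μ₂ : ℝ) : rejectionProb c (-μ₁) (-μ₂) = rejectionProb c μ₁ μ₂ := by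
  have h₁ : ∀ x, Φ (-c - -x) = 1 - Φ (c - x) := fun x => by rw [← Φ_neg]; congr 1; ring
  have h₂ : ∀ x, Φ (c - -x) = 1 - Φ (-c - x) := fun x => by rw [← Φ_neg]; congr 1; ring
  simp only [rejectionProb, h₁, h₂]
  ring

lemma rejectionProb_le_of_nonneg {α c μ₁ μ₂ : ℝ} (hc₀ : 0 ≤ c) (hα : α ≤ 1 / 2)
    (hc : Φ c = 1 - α) (h₁ : 0 ≤ μ₁) (h₂ : 0 ≤ μ₂) : rejectionProb c μ₁ μ₂ ≤ α := by
  have hΦ_neg_c : Φ (-c) = α := by rw [Φ_neg, hc]; ring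
  have upper_tail : ∀ μ, 0 ≤ μ → 1 - Φ (c - μ) ∈ Icc α 1 := fun μ hμ =>
    ⟨by linarith [Φ_mono (by linarith : c - μ ≤ c)], by linarith [Φ_nonneg (c - μ)]⟩
  have lower_tail : ∀ μ, 0 ≤ μ → Φ (-c - μ) * (1 - α) ≤ α * (1 - (1 - Φ (c - μ))) :=
    fun μ hμ => by
      rw [sub_sub_cancel, ← hc, ← hΦ_neg_c]
      exact Φ_neg_sub_mul_le hc₀ hμ
  exact mul_add_mul_le_of_mul_le ⟨by linarith [Φ_le_one c], hα⟩
    (upper_tail μ₁ h₁) (upper_tail μ₂ h₂) (lower_tail μ₁ h₁) (lower_tail μ₂ h₂)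

lemma rejectionProb_le {α c μ₁ μ₂ : ℝ} (hc₀ : 0 ≤ c) (hα : α ≤ 1 / 2) (hc : Φ c = 1 - α)
    (hμ : 0 ≤ μ₁ * μ₂) : rejectionProb c μ₁ μ₂ ≤ α := by
  have of_nonpos (h₁ : μ₁ ≤ 0) (h₂ : μ₂ ≤ 0) : rejectionProb c μ₁ μ₂ ≤ α := by
    rw [← rejectionProb_neg]
    exact rejectionProb_le_of_nonneg hc₀ hα hc (neg_nonneg.2 h₁) (neg_nonneg.2 h₂)
  rcases lt_or_ge μ₁ 0 with h₁ | h₁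
  · exact of_nonpos h₁.le (nonpos_of_mul_nonneg_right hμ h₁)
  rcases lt_or_ge μ₂ 0 with h₂ | h₂
  · exact of_nonpos (nonpos_of_mul_nonneg_left hμ h₂) h₂.le
  exact rejectionProb_le_of_nonneg hc₀ hα hc h₁ h₂

lemma tendsto_rejectionProb_zero_atTop (c : ℝ) :
    Tendsto (rejectionProb c 0) atTop (𝓝 (Φ (-c))) := by
  have hΦ : ∀ a, Tendsto (fun t => Φ (a - t)) atTop (𝓝 0) := fun a =>
    (tendsto_cdf_atBot stdGauss).comp <| (tendsto_atBot_add_const_left _ a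
      tendsto_neg_atTop_atBot).congr fun t => (sub_eq_add_neg a t).symm
  have h := ((tendsto_const_nhds (x := Φ (-c - 0))).mul
    ((tendsto_const_nhds (x := (1 : ℝ))).sub (hΦ c))).add
    ((tendsto_const_nhds (x := 1 - Φ (c - 0))).mul (hΦ (-c)))
  show Tendsto (fun t => rejectionProb c 0 t) _ _
  simpa [rejectionProb] using h

instance : IsProbabilityMeasure P2 := by unfold P2; infer_instance

lemma rejection_set_eq {c : ℝ} (hc : 0 ≤ c) (μ₁ μ₂ : ℝ) :
    {p : ℝ × ℝ | (μ₁ + p.1) * (μ₂ + p.2) < 0 ∧ c < |μ₁ + p.1| ∧ c < |μ₂ + p.2|} =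
      Iio (-c - μ₁) ×ˢ Ioi (c - μ₂) ∪ Ioi (c - μ₁) ×ˢ Iio (-c - μ₂) := by
  ext p
  simp only [mem_ofPred_eq, mem_union, mem_prod, mem_Iio, mem_Ioi, lt_abs]
  constructor
  · rintro ⟨hneg, h₁ | h₁, h₂ | h₂⟩
    · nlinarith
    · exact Or.inr ⟨by linarith, by linarith⟩
    · exact Or.inl ⟨by linarith, by linarith⟩
    · nlinarith
  · rintro (⟨h₁, h₂⟩ | ⟨h₁, h₂⟩)
    · exact ⟨mul_neg_of_neg_of_pos (by linarith) (by linarith), Or.inr (by linarith),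
        Or.inl (by linarith)⟩
    · exact ⟨mul_neg_of_pos_of_neg (by linarith) (by linarith), Or.inl (by linarith),
        Or.inr (by linarith)⟩

lemma P2_real_rejection_set {c : ℝ} (hc : 0 ≤ c) (μ₁ μ₂ : ℝ) :
    P2.real {p : ℝ × ℝ | (μ₁ + p.1) * (μ₂ + p.2) < 0 ∧ c < |μ₁ + p.1| ∧ c < |μ₂ + p.2|} =
      rejectionProb c μ₁ μ₂ := by
  have hdisj : Disjoint (Iio (-c - μ₁) ×ˢ Ioi (c - μ₂)) (Ioi (c - μ₁) ×ˢ Iio (-c - μ₂)) :=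
    disjoint_left.2 fun p h h' => by linarith [mem_Iio.1 h.1, mem_Ioi.1 h'.1]
  rw [rejection_set_eq hc, measureReal_union hdisj (measurableSet_Ioi.prod measurableSet_Iio), P2,
    measureReal_prod_prod, measureReal_prod_prod, stdGauss_real_Iio, stdGauss_real_Iio,
    stdGauss_real_Ioi, stdGauss_real_Ioi, rejectionProb]

/-- Nonconservativeness: along μ₁ = 0, μ₂ → ∞ the rejection probability tends to α,
and the supremum of the rejection probability over the null equals α. -/
theorem stmt1 (α c : ℝ) (hα : α ∈ Set.Ioo (0:ℝ) (1/2)) (hc : Φ c = 1 - α) :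
    Filter.Tendsto (fun μ₂ : ℝ =>
      (P2 {p : ℝ × ℝ | (0 + p.1) * (μ₂ + p.2) < 0 ∧ c < |p.1| ∧ c < |μ₂ + p.2|}).toReal)
      Filter.atTop (nhds α)
    ∧ (⨆ μ : ℝ × ℝ, ⨆ _ : μ.1 * μ.2 ≥ 0,
        P2 {p : ℝ × ℝ | (μ.1 + p.1) * (μ.2 + p.2) < 0 ∧ c < |μ.1 + p.1| ∧ c < |μ.2 + p.2|})
      = ENNReal.ofReal α := by
  have hc₀ : 0 ≤ c := (pos_of_Φ_eq_one_sub hα.2 hc).le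
  have hP2 (μ₁ μ₂ : ℝ) :
      P2 {p : ℝ × ℝ | (μ₁ + p.1) * (μ₂ + p.2) < 0 ∧ c < |μ₁ + p.1| ∧ c < |μ₂ + p.2|} =
        ENNReal.ofReal (rejectionProb c μ₁ μ₂) := by
    rw [← P2_real_rejection_set hc₀, ofReal_measureReal]
  have hlim : Tendsto (rejectionProb c 0) atTop (𝓝 α) := by
    simpa only [Φ_neg, hc, sub_sub_cancel] using tendsto_rejectionProb_zero_atTop c
  refine ⟨hlim.congr fun μ₂ => ?_, le_antisymm ?_ ?_⟩
  · simpa only [zero_add, measureReal_def] using (P2_real_rejection_set hc₀ 0 μ₂).symm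
  · exact iSup₂_le fun μ hμ => (hP2 μ.1 μ.2).trans_le (ENNReal.ofReal_le_ofReal
      (rejectionProb_le hc₀ hα.2.le hc hμ))
  · refine le_of_tendsto' (ENNReal.tendsto_ofReal hlim) fun μ₂ => ?_
    rw [← hP2]
    exact le_iSup₂ (f := fun (μ : ℝ × ℝ) (_ : μ.1 * μ.2 ≥ 0) => P2 {p : ℝ × ℝ |
      (μ.1 + p.1) * (μ.2 + p.2) < 0 ∧ c < |μ.1 + p.1| ∧ c < |μ.2 + p.2|}) (0, μ₂) (by simp)
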